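/- arXiv:1303.5161 — 2 statements merged into one kernel-verified Lean document; each statement's English description precedes it below -/
import Mathlib

section
/- For H ∈ (0,1) and 0 ≤ s ≤ t, the quantity V(s,t) = (t-s)^{2H} + (s+t)^{2H} - 2^{2H-1}(t^{2H} + s^{2H}) satisfies the lower bound [(2 - 2^{2H-1}) ∧ 1] (t-s)^{2H} ≤ V(s,t). -/
open Real Set

/-- Key concavity estimate: for `0 < β < 1` and `0 ≤ s ≤ t`, `t > 0`,
`2^β * t^β ≤ (t+s)^β + (2^β - 1) * (t-s)^β`. -/
lemma subfbm_aux_A {β : ℝ} (hβ0 : 0 < β) (hβ1 : β < 1) {s t : ℝ}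
    (hs : 0 ≤ s) (hst : s ≤ t) (ht : 0 < t) :
    2 ^ β * t ^ β ≤ (t + s) ^ β + (2 ^ β - 1) * (t - s) ^ β := by
  have hconc : ConcaveOn ℝ (Set.Ici (0:ℝ)) fun x : ℝ ↦ x ^ β :=
    Real.concaveOn_rpow hβ0.le hβ1.le
  set x : ℝ := s / t with hxdef
  have hx0 : 0 ≤ x := div_nonneg hs ht.le
  have hx1 : x ≤ 1 := (div_le_one ht).2 hst
  have h1 : (1 - x) * (1:ℝ) ^ β + x * (2:ℝ) ^ β ≤ (1 + x) ^ β := by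
    have := hconc.2 (show (1:ℝ) ∈ Set.Ici (0:ℝ) by norm_num)
      (show (2:ℝ) ∈ Set.Ici (0:ℝ) by norm_num)
      (show (0:ℝ) ≤ 1 - x by linarith) hx0 (by ring)
    simpa [smul_eq_mul, show 1 - x + x * 2 = 1 + x by ring] using this
  have h2 : (1 - x) * (1:ℝ) ^ β + x * (0:ℝ) ^ β ≤ (1 - x) ^ β := by
    have := hconc.2 (show (1:ℝ) ∈ Set.Ici (0:ℝ) by norm_num)
      (show (0:ℝ) ∈ Set.Ici (0:ℝ) by norm_num)
      (show (0:ℝ) ≤ 1 - x by linarith) hx0 (by ring)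
    simpa [smul_eq_mul, show 1 - x + x * 0 = 1 - x by ring] using this
  have h0β : (0:ℝ) ^ β = 0 := Real.zero_rpow hβ0.ne'
  have h1β : (1:ℝ) ^ β = 1 := Real.one_rpow β
  have h2β : (1:ℝ) ≤ 2 ^ β := Real.one_le_rpow (by norm_num) hβ0.le
  have key : 2 ^ β ≤ (1 + x) ^ β + (2 ^ β - 1) * (1 - x) ^ β := by
    rw [h1β] at h1 h2; rw [h0β] at h2
    nlinarith [h1, h2, hx0, hx1]
  have hkey := mul_le_mul_of_nonneg_left key (Real.rpow_nonneg ht.le β)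
  calc 2 ^ β * t ^ β = t ^ β * 2 ^ β := by ring
    _ ≤ t ^ β * ((1 + x) ^ β + (2 ^ β - 1) * (1 - x) ^ β) := hkey
    _ = (t + s) ^ β + (2 ^ β - 1) * (t - s) ^ β := by
        have htne : t ≠ 0 := ht.ne'
        have e1 : (t + s) ^ β = t ^ β * (1 + x) ^ β := by
          rw [← Real.mul_rpow ht.le (by linarith)]
          congr 1
          rw [hxdef]
          field_simp
        have e2 : (t - s) ^ β = t ^ β * (1 - x) ^ β := by
          rw [← Real.mul_rpow ht.le (by linarith)]
          congr 1
          rw [hxdef]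
          field_simp
        rw [e1, e2]; ring

/-- For `1 < γ < 2` and `0 ≤ s ≤ t`:
`2^(γ-1) * (t^γ + s^γ) ≤ (t+s)^γ + (2^(γ-1)-1) * (t-s)^γ`. -/
lemma subfbm_aux_B {γ : ℝ} (hγ1 : 1 < γ) (hγ2 : γ < 2) {s t : ℝ}
    (hs : 0 ≤ s) (hst : s ≤ t) :
    2 ^ (γ - 1) * (t ^ γ + s ^ γ) ≤ (t + s) ^ γ + (2 ^ (γ - 1) - 1) * (t - s) ^ γ := by
  set c : ℝ := 2 ^ (γ - 1) with hc
  set f : ℝ → ℝ := fun u => (u + s) ^ γ + (c - 1) * (u - s) ^ γ - c * (u ^ γ + s ^ γ) with hf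
  have hder : ∀ u : ℝ, HasDerivAt f
      (γ * (u + s) ^ (γ - 1) + (c - 1) * (γ * (u - s) ^ (γ - 1)) - c * (γ * u ^ (γ - 1))) u := by
    intro u
    have hd1 : HasDerivAt (fun u : ℝ => (u + s) ^ γ) (γ * (u + s) ^ (γ - 1)) u := by
      have := (Real.hasDerivAt_rpow_const (x := u + s) (p := γ) (Or.inr hγ1.le)).comp u
        ((hasDerivAt_id u).add_const s)
      simpa [Function.comp_def] using this
    have hd2 : HasDerivAt (fun u : ℝ => (u - s) ^ γ) (γ * (u - s) ^ (γ - 1)) u := by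
      have := (Real.hasDerivAt_rpow_const (x := u - s) (p := γ) (Or.inr hγ1.le)).comp u
        ((hasDerivAt_id u).sub_const s)
      simpa [Function.comp_def] using this
    have hd3 : HasDerivAt (fun u : ℝ => u ^ γ) (γ * u ^ (γ - 1)) u :=
      Real.hasDerivAt_rpow_const (Or.inr hγ1.le)
    exact ((hd1.add (hd2.const_mul (c - 1))).sub
      ((hd3.add_const (s ^ γ)).const_mul c))
  have hmono : MonotoneOn f (Set.Ici s) := by
    apply monotoneOn_of_deriv_nonneg (convex_Ici s)
    · exact fun u _ => (hder u).continuousAt.continuousWithinAt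
    · exact fun u _ => ((hder u).differentiableAt).differentiableWithinAt
    · intro u hu
      rw [interior_Ici] at hu
      rw [(hder u).deriv]
      have ht0 : 0 < u := lt_of_le_of_lt hs hu
      have hA := subfbm_aux_A (β := γ - 1) (by linarith) (by linarith) hs hu.le ht0
      have hγ0 : 0 < γ := by linarith
      nlinarith [hA, hγ0]
  have hfs : f s = 0 := by
    have h2s : (s + s) ^ γ = 2 ^ γ * s ^ γ := by
      rw [show s + s = 2 * s by ring, Real.mul_rpow (by norm_num) hs]
    have h0γ : ((0:ℝ)) ^ γ = 0 := Real.zero_rpow (by positivity)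
    have hcc : c * 2 = 2 ^ γ := by
      have h := Real.rpow_add (show (0:ℝ) < 2 by norm_num) (γ - 1) 1
      rw [show γ - 1 + 1 = γ by ring, Real.rpow_one] at h
      rw [hc, ← h]
    simp only [hf, sub_self, h0γ, h2s]
    linear_combination (-(s ^ γ)) * hcc
  have := hmono (Set.self_mem_Ici) (show t ∈ Set.Ici s from hst) hst
  rw [hfs] at this
  simp only [hf] at this
  linarith

theorem subfbm_incr_var_lower (H : ℝ) (hH : H ∈ Set.Ioo (0:ℝ) 1)
    (s t : ℝ) (hs : 0 ≤ s) (hst : s ≤ t) :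
    min (2 - 2 ^ (2*H-1)) 1 * (t-s) ^ (2*H)
      ≤ (t-s) ^ (2*H) + (s+t) ^ (2*H) - 2 ^ (2*H-1) * (t ^ (2*H) + s ^ (2*H)) := by
  obtain ⟨hH0, hH1⟩ := hH
  rcases le_or_gt (2 * H) 1 with hγ | hγ
  · -- H ≤ 1/2 : min is 1, need (s+t)^γ ≥ 2^(γ-1)(t^γ+s^γ)
    have hβ : (2:ℝ) ^ (2*H-1) ≤ 1 :=
      Real.rpow_le_one_of_one_le_of_nonpos (by norm_num) (by linarith)
    rw [min_eq_right (by linarith)]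
    have hconc : ConcaveOn ℝ (Set.Ici (0:ℝ)) fun x : ℝ ↦ x ^ (2*H) :=
      Real.concaveOn_rpow (by linarith) hγ
    have hmid := hconc.2 (show s ∈ Set.Ici (0:ℝ) from hs)
      (show t ∈ Set.Ici (0:ℝ) from le_trans hs hst)
      (show (0:ℝ) ≤ 1/2 by norm_num) (show (0:ℝ) ≤ 1/2 by norm_num)
      (show (1:ℝ)/2 + 1/2 = 1 by norm_num)
    simp only [smul_eq_mul] at hmid
    have h2γ : (s + t) ^ (2*H) = 2 ^ (2*H) * ((1/2) * s + (1/2) * t) ^ (2*H) := by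
      rw [← Real.mul_rpow (by norm_num) (by linarith)]
      congr 1
      ring
    have hcc : (2:ℝ) ^ (2*H) = 2 ^ (2*H-1) * 2 := by
      have h := Real.rpow_add (show (0:ℝ) < 2 by norm_num) (2*H - 1) 1
      rw [show 2*H - 1 + 1 = 2*H by ring, Real.rpow_one] at h
      exact h
    have hfin : 2 ^ (2*H-1) * (t ^ (2*H) + s ^ (2*H)) ≤ (s+t) ^ (2*H) := by
      have h := mul_le_mul_of_nonneg_left hmid
        (by positivity : (0:ℝ) ≤ 2 ^ (2*H))
      rw [← h2γ] at h
      have heq : 2 ^ (2*H) * (1/2 * s ^ (2*H) + 1/2 * t ^ (2*H))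
          = 2 ^ (2*H-1) * (t ^ (2*H) + s ^ (2*H)) := by rw [hcc]; ring
      linarith [h, heq.symm.trans_le h]
    rw [one_mul]
    linarith [hfin]
  · -- H > 1/2
    have hβ : (1:ℝ) ≤ 2 ^ (2*H-1) :=
      Real.one_le_rpow (by norm_num) (by linarith)
    rw [min_eq_left (by linarith)]
    have hB := subfbm_aux_B (γ := 2*H) hγ (by linarith) hs hst
    have ha : s + t = t + s := by ring
    rw [ha]
    nlinarith [hB]
end

section
/- For H ∈ (0,1) and 0 ≤ s ≤ t, the quantity V(s,t) = (t-s)^{2H} + (s+t)^{2H} - 2^{2H-1}(t^{2H} + s^{2H}) satisfies the upper bound V(s,t) ≤ [(2 - 2^{2H-1}) ∨ 1] (t-s)^{2H}. -/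
open Real NNReal

lemma lemA {q a b : ℝ} (hq : q ≤ 0) (ha : 0 < a) (hb : 0 < b) :
    2 * ((a + b) / 2) ^ q ≤ a ^ q + b ^ q := by
  have hab : (0:ℝ) < a * b := mul_pos ha hb
  have h1 : Real.sqrt (a * b) ≤ (a + b) / 2 := by
    rw [show (a + b) / 2 = Real.sqrt (((a + b) / 2) ^ 2) from
      (Real.sqrt_sq (by positivity)).symm]
    apply Real.sqrt_le_sqrt; nlinarith [sq_nonneg (a - b)]
  have h2 : ((a + b) / 2) ^ q ≤ (Real.sqrt (a * b)) ^ q :=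
    Real.rpow_le_rpow_of_nonpos (Real.sqrt_pos.mpr hab) h1 hq
  have h3 : (Real.sqrt (a * b)) ^ q = Real.sqrt (a ^ q) * Real.sqrt (b ^ q) := by
    rw [← Real.sqrt_mul (Real.rpow_nonneg ha.le _), ← Real.mul_rpow ha.le hb.le,
      Real.sqrt_eq_rpow, Real.sqrt_eq_rpow]
    rw [← Real.rpow_mul hab.le, ← Real.rpow_mul hab.le, mul_comm q]
  have h4 : 2 * (Real.sqrt (a ^ q) * Real.sqrt (b ^ q)) ≤ a ^ q + b ^ q := by
    nlinarith [sq_nonneg (Real.sqrt (a ^ q) - Real.sqrt (b ^ q)),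
      Real.sq_sqrt (Real.rpow_nonneg ha.le q), Real.sq_sqrt (Real.rpow_nonneg hb.le q)]
  nlinarith [h2, h3, h4]

lemma lemB {x y p : ℝ} (hx : 0 ≤ x) (hy : 0 ≤ y) (hp : 1 ≤ p) :
    (x + y) ^ p ≤ 2 ^ (p - 1) * (x ^ p + y ^ p) := by
  have := NNReal.rpow_add_le_mul_rpow_add_rpow x.toNNReal y.toNNReal hp
  have h2 : ((x.toNNReal + y.toNNReal : ℝ≥0) : ℝ) = x + y := by
    simp [Real.coe_toNNReal _ hx, Real.coe_toNNReal _ hy]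
  calc (x + y) ^ p = ((x.toNNReal + y.toNNReal : ℝ≥0) : ℝ) ^ p := by rw [h2]
    _ ≤ ((2 ^ (p - 1) * (x.toNNReal ^ p + y.toNNReal ^ p) : ℝ≥0) : ℝ) := by
        rw [← NNReal.coe_rpow]; exact_mod_cast this
    _ = 2 ^ (p - 1) * (x ^ p + y ^ p) := by
        push_cast
        rw [Real.coe_toNNReal _ hx, Real.coe_toNNReal _ hy]

lemma lemC {p u s : ℝ} (hp0 : 0 < p) (hp1 : p ≤ 1) (hu : 0 ≤ u) (hs : 0 ≤ s) :
    2 ^ (p-1) * u ^ p - u ^ p ≤ 2 ^ (p-1) * ((s+u)^p + s^p) - (2*s+u)^p := by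
  set g : ℝ → ℝ := fun x => 2 ^ (p-1) * ((x+u)^p + x^p) - (2*x+u)^p with hg
  have hcont : Continuous g := by
    apply Continuous.sub
    · exact continuous_const.mul
        (((continuous_id.add continuous_const).rpow_const fun x => Or.inr hp0.le).add
          (continuous_id.rpow_const fun x => Or.inr hp0.le))
    · exact ((continuous_const.mul continuous_id).add continuous_const).rpow_const
        fun x => Or.inr hp0.le
  have hderiv : ∀ x ∈ Set.Ioo (0:ℝ) s, HasDerivAt g
      (2 ^ (p-1) * (1 * p * (x+u)^(p-1) + 1 * p * x^(p-1)) - 2 * p * (2*x+u)^(p-1)) x := by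
    intro x hx
    have hx0 : 0 < x := hx.1
    have h1 : HasDerivAt (fun y : ℝ => (y+u)^p) (1 * p * (x+u)^(p-1)) x :=
      ((hasDerivAt_id x).add_const u).rpow_const (Or.inl (by positivity))
    have h2 : HasDerivAt (fun y : ℝ => y^p) (1 * p * x^(p-1)) x :=
      (hasDerivAt_id x).rpow_const (Or.inl hx0.ne')
    have h3 : HasDerivAt (fun y : ℝ => (2*y+u)^p) (2 * p * (2*x+u)^(p-1)) x := by
      have := (((hasDerivAt_id x).const_mul 2).add_const u).rpow_const
        (p := p) (Or.inl (by positivity))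
      simpa using this
    exact ((h1.add h2).const_mul _).sub h3
  have hmono : MonotoneOn g (Set.Icc 0 s) := by
    apply monotoneOn_of_deriv_nonneg (convex_Icc 0 s) hcont.continuousOn
    · rw [interior_Icc]
      exact fun x hx => (hderiv x hx).differentiableAt.differentiableWithinAt
    · rw [interior_Icc]
      intro x hx
      rw [(hderiv x hx).deriv]
      have hx0 : 0 < x := hx.1
      have key := lemA (a := 2*x) (b := 2*x+2*u) (q := p-1)
        (by linarith) (by linarith) (by linarith)
      have e0 : (2*x + (2*x+2*u)) / 2 = 2*x+u := by ring
      rw [e0] at key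
      have e1 : (2*x : ℝ) ^ (p-1) = 2 ^ (p-1) * x ^ (p-1) :=
        Real.mul_rpow (by norm_num) hx0.le
      have e2 : (2*x+2*u : ℝ) ^ (p-1) = 2 ^ (p-1) * (x+u) ^ (p-1) := by
        rw [show (2*x+2*u : ℝ) = 2*(x+u) by ring]
        exact Real.mul_rpow (by norm_num) (by linarith)
      rw [e1, e2] at key
      nlinarith [key, hp0]
  have h0 : g 0 ≤ g s := hmono ⟨le_refl 0, hs⟩ ⟨hs, le_refl s⟩ hs
  simpa [hg, Real.zero_rpow hp0.ne'] using h0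

theorem subfbm_incr_var_upper (H : ℝ) (hH : H ∈ Set.Ioo (0:ℝ) 1)
    (s t : ℝ) (hs : 0 ≤ s) (hst : s ≤ t) :
    (t-s) ^ (2*H) + (s+t) ^ (2*H) - 2 ^ (2*H-1) * (t ^ (2*H) + s ^ (2*H))
      ≤ max (2 - 2 ^ (2*H-1)) 1 * (t-s) ^ (2*H) := by
  obtain ⟨hH0, hH1⟩ := hH
  set p := 2*H with hp
  have hp0 : 0 < p := by positivity
  have ht : 0 ≤ t := hs.trans hst
  rcases le_or_gt 1 p with h1p | hp1
  · -- p ≥ 1 : convexity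
    have key : (s + t) ^ p ≤ 2 ^ (p-1) * (s ^ p + t ^ p) := lemB hs ht h1p
    have hmax : (1:ℝ) ≤ max (2 - 2 ^ (p-1)) 1 := le_max_right _ _
    have hts : (0:ℝ) ≤ (t-s) ^ p := Real.rpow_nonneg (by linarith) _
    nlinarith [key, hmax, hts]
  · -- p ≤ 1 : monotonicity argument
    have h21 : (2:ℝ) ^ (p-1) ≤ 1 :=
      Real.rpow_le_one_of_one_le_of_nonpos one_le_two (by linarith)
    have hmax : max (2 - (2:ℝ) ^ (p-1)) 1 = 2 - (2:ℝ) ^ (p-1) := max_eq_left (by linarith)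
    rw [hmax]
    have key := lemC (u := t - s) (s := s) hp0 hp1.le (by linarith) hs
    have e1 : s + (t - s) = t := by ring
    have e2 : 2*s + (t - s) = s + t := by ring
    rw [e1, e2] at key
    nlinarith [key]
end
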